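/- For all A > 0, f(A) ≥ f^{RAR}(A), i.e., the blood flow area function is pointwise bounded below by its two-rarefaction approximation. Consequently the two-rarefaction root A_{*rr} is an upper bound for the exact root A_* of f. -/

import Mathlib

/-- Blood flow wave-curve branch function for a state with area `AK`:
rarefaction branch for `A < AK`, shock branch for `A ≥ AK`; here the wave
speed is `c(A) = √(3γ/2) A^{1/4}`. -/
noncomputable def bfeBranch (γ AK A : ℝ) : ℝ :=
  if A < AK then
    4 * (Real.sqrt (3 * γ / 2) * A ^ ((1 : ℝ) / 4)
          - Real.sqrt (3 * γ / 2) * AK ^ ((1 : ℝ) / 4))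
  else
    Real.sqrt (γ * (A - AK) * (A ^ ((3 : ℝ) / 2) - AK ^ ((3 : ℝ) / 2)) / (A * AK))

/-!
Writing `a = A^{1/4}` and `b = A_K^{1/4}`, the square of the rarefaction branch is
`24 γ (a - b)²`, while the radicand of the shock branch is
`γ (a - b)² (a + b)² (a² + b²) (a⁴ + a²b² + b⁴) / (a⁴ b⁴)`; by AM-GM on each of the last
three factors the latter is the larger, for all `A, A_K > 0`. Hence every branch dominates
the rarefaction curve, so `f ≥ f^{RAR}`, and since `f^{RAR}` is strictly increasing its root
lies to the right of that of `f`.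
-/

open Real

lemma rpow_one_div_four_pow_four {A : ℝ} (hA : 0 ≤ A) : (A ^ ((1 : ℝ) / 4)) ^ 4 = A := by
  rw [← rpow_natCast, ← rpow_mul hA]
  norm_num

lemma rpow_one_div_four_pow_six {A : ℝ} (hA : 0 ≤ A) :
    (A ^ ((1 : ℝ) / 4)) ^ 6 = A ^ ((3 : ℝ) / 2) := by
  rw [← rpow_natCast, ← rpow_mul hA]
  norm_num

lemma twenty_four_mul_sq_sub_mul_le {a b : ℝ} (ha : 0 ≤ a) (hb : 0 ≤ b) :
    24 * (a - b) ^ 2 * (a ^ 4 * b ^ 4) ≤ (a ^ 4 - b ^ 4) * (a ^ 6 - b ^ 6) := by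
  have h₁ : 4 * (a * b) ≤ (a + b) ^ 2 := by nlinarith [sq_nonneg (a - b)]
  have h₂ : 2 * (a * b) ≤ a ^ 2 + b ^ 2 := by nlinarith [sq_nonneg (a - b)]
  have h₃ : 3 * (a * b) ^ 2 ≤ a ^ 4 + a ^ 2 * b ^ 2 + b ^ 4 := by
    nlinarith [sq_nonneg (a ^ 2 - b ^ 2)]
  have amgm : 24 * (a * b) ^ 4 ≤ (a + b) ^ 2 * (a ^ 2 + b ^ 2) * (a ^ 4 + a ^ 2 * b ^ 2 + b ^ 4) :=
    calc 24 * (a * b) ^ 4 = 4 * (a * b) * (2 * (a * b)) * (3 * (a * b) ^ 2) := by ring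
      _ ≤ _ := by gcongr
  calc 24 * (a - b) ^ 2 * (a ^ 4 * b ^ 4) = (a - b) ^ 2 * (24 * (a * b) ^ 4) := by ring
    _ ≤ (a - b) ^ 2 * ((a + b) ^ 2 * (a ^ 2 + b ^ 2) * (a ^ 4 + a ^ 2 * b ^ 2 + b ^ 4)) := by
      gcongr
    _ = (a ^ 4 - b ^ 4) * (a ^ 6 - b ^ 6) := by ring

lemma four_mul_sub_le_sqrt {γ a b : ℝ} (hγ : 0 ≤ γ) (ha : 0 < a) (hb : 0 < b) :
    4 * (√(3 * γ / 2) * a - √(3 * γ / 2) * b) ≤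
      √(γ * (a ^ 4 - b ^ 4) * (a ^ 6 - b ^ 6) / (a ^ 4 * b ^ 4)) := by
  refine (le_abs_self _).trans (abs_le_sqrt ?_)
  rw [le_div_iff₀ (by positivity)]
  have hs : √(3 * γ / 2) ^ 2 = 3 * γ / 2 := sq_sqrt (by positivity)
  calc (4 * (√(3 * γ / 2) * a - √(3 * γ / 2) * b)) ^ 2 * (a ^ 4 * b ^ 4)
        = 16 * √(3 * γ / 2) ^ 2 * (a - b) ^ 2 * (a ^ 4 * b ^ 4) := by ring
      _ = γ * (24 * (a - b) ^ 2 * (a ^ 4 * b ^ 4)) := by rw [hs]; ring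
      _ ≤ γ * ((a ^ 4 - b ^ 4) * (a ^ 6 - b ^ 6)) := by
        exact mul_le_mul_of_nonneg_left (twenty_four_mul_sq_sub_mul_le ha.le hb.le) hγ
      _ = γ * (a ^ 4 - b ^ 4) * (a ^ 6 - b ^ 6) := by ring

lemma rarefaction_le_shock {γ AK A : ℝ} (hγ : 0 ≤ γ) (hAK : 0 < AK) (hA : 0 < A) :
    4 * (√(3 * γ / 2) * A ^ ((1 : ℝ) / 4) - √(3 * γ / 2) * AK ^ ((1 : ℝ) / 4)) ≤
      √(γ * (A - AK) * (A ^ ((3 : ℝ) / 2) - AK ^ ((3 : ℝ) / 2)) / (A * AK)) := by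
  have key := four_mul_sub_le_sqrt hγ (rpow_pos_of_pos hA ((1 : ℝ) / 4))
    (rpow_pos_of_pos hAK ((1 : ℝ) / 4))
  rwa [rpow_one_div_four_pow_four hA.le, rpow_one_div_four_pow_four hAK.le,
    rpow_one_div_four_pow_six hA.le, rpow_one_div_four_pow_six hAK.le] at key

lemma rarefaction_le_bfeBranch {γ AK A : ℝ} (hγ : 0 ≤ γ) (hAK : 0 < AK) (hA : 0 < A) :
    4 * (√(3 * γ / 2) * A ^ ((1 : ℝ) / 4) - √(3 * γ / 2) * AK ^ ((1 : ℝ) / 4)) ≤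
      bfeBranch γ AK A := by
  unfold bfeBranch
  split_ifs
  · exact le_rfl
  · exact rarefaction_le_shock hγ hAK hA

/-- The blood flow area function `f` is pointwise bounded below by its
two-rarefaction approximation `f^RAR`; consequently the two-rarefaction root
`A_{*rr}` is an upper bound for the exact root `A_*` of `f`. -/
theorem bfe_area_function_ge_two_rarefaction (γ AL AR uL uR : ℝ)
    (hγ : 0 < γ) (hAL : 0 < AL) (hAR : 0 < AR) :
    (∀ A : ℝ, 0 < A →
      bfeBranch γ AL A + bfeBranch γ AR A + (uR - uL) ≥
        4 * (Real.sqrt (3 * γ / 2) * A ^ ((1 : ℝ) / 4)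
              - Real.sqrt (3 * γ / 2) * AL ^ ((1 : ℝ) / 4))
          + 4 * (Real.sqrt (3 * γ / 2) * A ^ ((1 : ℝ) / 4)
              - Real.sqrt (3 * γ / 2) * AR ^ ((1 : ℝ) / 4)) + (uR - uL)) ∧
    (∀ Astar Arr : ℝ, 0 < Astar → 0 < Arr →
      bfeBranch γ AL Astar + bfeBranch γ AR Astar + (uR - uL) = 0 →
      4 * (Real.sqrt (3 * γ / 2) * Arr ^ ((1 : ℝ) / 4)
            - Real.sqrt (3 * γ / 2) * AL ^ ((1 : ℝ) / 4))
        + 4 * (Real.sqrt (3 * γ / 2) * Arr ^ ((1 : ℝ) / 4)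
            - Real.sqrt (3 * γ / 2) * AR ^ ((1 : ℝ) / 4)) + (uR - uL) = 0 →
      Astar ≤ Arr) := by
  refine ⟨fun A hA => ?_, fun Astar Arr hAstar hArr hroot hroot_rr => ?_⟩
  · linarith [rarefaction_le_bfeBranch hγ.le hAL hA, rarefaction_le_bfeBranch hγ.le hAR hA]
  · have hL := rarefaction_le_bfeBranch hγ.le hAL hAstar
    have hR := rarefaction_le_bfeBranch hγ.le hAR hAstar
    have hs : 0 < √(3 * γ / 2) := by positivity
    have hc : Astar ^ ((1 : ℝ) / 4) ≤ Arr ^ ((1 : ℝ) / 4) :=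
      le_of_mul_le_mul_left (by linarith) hs
    exact (rpow_le_rpow_iff hAstar.le hArr.le (by norm_num)).1 hc
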